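/- Let R, R* : ℝ → SO(3) be differentiable curves with Ṙ = R·hat(ω) and Ṙ* = R*·hat(ω*). Define the attitude error e_R = (1/2)·vee(R*ᵀR − RᵀR*) and angular velocity error e_ω = ω − RᵀR*ω*. Then ė_R = E(R, R*)·e_ω where E(R, R*) = (1/2)(tr(RᵀR*)·I − RᵀR*). -/

import Mathlib

open Matrix

def hat (v : Fin 3 → ℝ) : Matrix (Fin 3) (Fin 3) ℝ :=
  !![0, -v 2, v 1; v 2, 0, -v 0; -v 1, v 0, 0]

def vee (A : Matrix (Fin 3) (Fin 3) ℝ) : Fin 3 → ℝ := ![A 2 1, A 0 2, A 1 0]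

/-!
Write `Q = RᵀR*`. Using `hat(v)ᵀ = -hat(v)`, the derivative of `R*ᵀR - RᵀR*` is
`(hat ω · Q + Qᵀ · hat ω) - (hat ω* · Qᵀ + Q · hat ω*)`. For every `3 × 3` matrix `A`,
`vee (hat v · A + Aᵀ · hat v) = (tr A · I - A) v`, so
`ė_R = ½ ((tr Q · I - Q) ω - (tr Q · I - Qᵀ) ω*)`.
Since `Q ∈ SO(3)` its adjugate is `Qᵀ`, and Cayley–Hamilton in dimension three gives
`adj Q = Q² - tr Q · Q + tr (adj Q) · I`; hence `(tr Q · I - Q) Q = tr Q · I - Qᵀ`, which is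
exactly what turns the second term into `(tr Q · I - Q) Q ω*`.
-/

theorem Matrix.adjugate_fin_three_eq_mul_self_sub_trace_smul_add {α : Type*} [CommRing α]
    (A : Matrix (Fin 3) (Fin 3) α) :
    A.adjugate = A * A - A.trace • A + A.adjugate.trace • 1 := by
  ext i j
  fin_cases i <;> fin_cases j <;>
    simp [adjugate_fin_three, mul_apply, Fin.sum_univ_three, trace_fin_three] <;>
    ring

theorem Matrix.adjugate_eq_transpose_of_transpose_mul_self_eq_one {n α : Type*} [Fintype n]
    [DecidableEq n] [CommRing α] {Q : Matrix n n α} (hQ : Qᵀ * Q = 1) (hdet : Q.det = 1) :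
    Q.adjugate = Qᵀ :=
  calc Q.adjugate = Q.adjugate * (Q * Qᵀ) := by rw [mul_eq_one_comm.mp hQ, Matrix.mul_one]
    _ = Qᵀ := by rw [← Matrix.mul_assoc, adjugate_mul, hdet, one_smul, Matrix.one_mul]

theorem Matrix.trace_smul_one_sub_self_mul_self {α : Type*} [CommRing α]
    {Q : Matrix (Fin 3) (Fin 3) α} (hQ : Qᵀ * Q = 1) (hdet : Q.det = 1) :
    (Q.trace • 1 - Q) * Q = Q.trace • 1 - Qᵀ := by
  have hadj := Q.adjugate_fin_three_eq_mul_self_sub_trace_smul_add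
  rw [adjugate_eq_transpose_of_transpose_mul_self_eq_one hQ hdet, trace_transpose] at hadj
  rw [hadj, sub_mul, smul_mul_assoc, Matrix.one_mul]
  abel

theorem hat_transpose (v : Fin 3 → ℝ) : (hat v)ᵀ = -hat v := by
  ext i j
  fin_cases i <;> fin_cases j <;> simp [hat]

theorem vee_sub (A B : Matrix (Fin 3) (Fin 3) ℝ) : vee (A - B) = vee A - vee B := by
  ext i
  fin_cases i <;> rfl

theorem vee_hat_mul_add_transpose_mul_hat (A : Matrix (Fin 3) (Fin 3) ℝ) (v : Fin 3 → ℝ) :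
    vee (hat v * A + Aᵀ * hat v) = (A.trace • 1 - A) *ᵥ v := by
  ext i
  fin_cases i <;>
    simp [vee, hat, mul_apply, mulVec, vecMul, dotProduct, Fin.sum_univ_three, trace_fin_three,
      one_apply] <;>
    ring

theorem HasDerivAt.matrix_mul_apply {𝕜 m n p : Type*} [NontriviallyNormedField 𝕜] [Fintype n]
    {A : 𝕜 → Matrix m n 𝕜} {B : 𝕜 → Matrix n p 𝕜} {A' : Matrix m n 𝕜} {B' : Matrix n p 𝕜} {t : 𝕜}
    (hA : ∀ i j, HasDerivAt (fun s => A s i j) (A' i j) t)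
    (hB : ∀ i j, HasDerivAt (fun s => B s i j) (B' i j) t) (i : m) (k : p) :
    HasDerivAt (fun s => (A s * B s) i k) ((A' * B t + A t * B') i k) t := by
  simp only [mul_apply, Matrix.add_apply, ← Finset.sum_add_distrib]
  exact HasDerivAt.fun_sum fun j _ => (hA i j).fun_mul (hB j k)

theorem HasDerivAt.matrix_transpose_mul_sub_transpose_mul_apply {𝕜 n : Type*}
    [NontriviallyNormedField 𝕜] [Fintype n] {A B : 𝕜 → Matrix n n 𝕜} {A' B' : Matrix n n 𝕜}
    {t : 𝕜} (hA : ∀ i j, HasDerivAt (fun s => A s i j) (A' i j) t)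
    (hB : ∀ i j, HasDerivAt (fun s => B s i j) (B' i j) t) (i j : n) :
    HasDerivAt (fun s => ((B s)ᵀ * A s - (A s)ᵀ * B s) i j)
      ((B'ᵀ * A t + (B t)ᵀ * A' - (A'ᵀ * B t + (A t)ᵀ * B')) i j) t :=
  (HasDerivAt.matrix_mul_apply (fun i j => hB j i) hA i j).sub
    (HasDerivAt.matrix_mul_apply (fun i j => hA j i) hB i j)

theorem hasDerivAt_vee_apply {M : ℝ → Matrix (Fin 3) (Fin 3) ℝ} {M' : Matrix (Fin 3) (Fin 3) ℝ}
    {t : ℝ} (hM : ∀ a b, HasDerivAt (fun s => M s a b) (M' a b) t) (i : Fin 3) :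
    HasDerivAt (fun s => vee (M s) i) (vee M' i) t := by
  fin_cases i
  exacts [hM 2 1, hM 0 2, hM 1 0]

theorem vee_attitude_error_deriv (A B : Matrix (Fin 3) (Fin 3) ℝ)
    (v w : Fin 3 → ℝ) (hA : Aᵀ * A = 1) (hB : Bᵀ * B = 1) (hdet : (Aᵀ * B).det = 1) :
    vee ((B * hat w)ᵀ * A + Bᵀ * (A * hat v) - ((A * hat v)ᵀ * B + Aᵀ * (B * hat w))) =
      ((Aᵀ * B).trace • 1 - Aᵀ * B) *ᵥ (v - (Aᵀ * B) *ᵥ w) := by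
  set Q := Aᵀ * B with hQ_def
  have hQ : Qᵀ * Q = 1 := by
    rw [hQ_def, transpose_mul, transpose_transpose, Matrix.mul_assoc, ← Matrix.mul_assoc A,
      mul_eq_one_comm.mp hA, Matrix.one_mul, hB]
  have hsplit : (B * hat w)ᵀ * A + Bᵀ * (A * hat v) - ((A * hat v)ᵀ * B + Aᵀ * (B * hat w)) =
      (hat v * Q + Qᵀ * hat v) - (hat w * Qᵀ + Qᵀᵀ * hat w) := by
    simp only [hQ_def, transpose_mul, transpose_transpose, hat_transpose, Matrix.mul_assoc,
      Matrix.neg_mul]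
    abel
  rw [hsplit, vee_sub, vee_hat_mul_add_transpose_mul_hat, vee_hat_mul_add_transpose_mul_hat,
    trace_transpose, mulVec_sub, mulVec_mulVec, trace_smul_one_sub_self_mul_self hQ hdet]

/-- Let `R, R* : ℝ → SO(3)` with `Ṙ = R·hat(ω)`, `Ṙ* = R*·hat(ω*)`. With
`e_R = (1/2)·vee(R*ᵀR − RᵀR*)` and `e_ω = ω − RᵀR*ω*`, one has
`ė_R = E(R,R*)·e_ω` where `E(R,R*) = (1/2)(tr(RᵀR*)·I − RᵀR*)`. -/
theorem stmt12 (R Rs : ℝ → Matrix (Fin 3) (Fin 3) ℝ) (ω ωs : ℝ → Fin 3 → ℝ)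
    (hSO : ∀ t, (R t)ᵀ * R t = 1 ∧ (R t).det = 1)
    (hSOs : ∀ t, (Rs t)ᵀ * Rs t = 1 ∧ (Rs t).det = 1)
    (hR : ∀ t i j, HasDerivAt (fun s => R s i j) ((R t * hat (ω t)) i j) t)
    (hRs : ∀ t i j, HasDerivAt (fun s => Rs s i j) ((Rs t * hat (ωs t)) i j) t) :
    ∀ t i, HasDerivAt
      (fun s => ((1 / 2 : ℝ) • vee ((Rs s)ᵀ * R s - (R s)ᵀ * Rs s)) i)
      ((((1 / 2 : ℝ) • (((R t)ᵀ * Rs t).trace • (1 : Matrix (Fin 3) (Fin 3) ℝ)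
          - (R t)ᵀ * Rs t)) *ᵥ (ω t - ((R t)ᵀ * Rs t) *ᵥ ωs t)) i) t := by
  intro t i
  have hdet : ((R t)ᵀ * Rs t).det = 1 := by
    rw [det_mul, det_transpose, (hSO t).2, (hSOs t).2, one_mul]
  have hvee := hasDerivAt_vee_apply
    (HasDerivAt.matrix_transpose_mul_sub_transpose_mul_apply (hR t) (hRs t)) i
  rw [vee_attitude_error_deriv _ _ _ _ (hSO t).1 (hSOs t).1 hdet] at hvee
  simpa only [one_div, Pi.smul_apply, smul_eq_mul, smul_mulVec] using hvee.const_mul (1 / 2 : ℝ)
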